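/- Let n ≥ 1. For each subset S of {1,…,n}, let c^S be the sequence of length 2n+1 obtained from the sequence (1, 2, 2, …, 2, 0, 0, …, 0) (one 1, then n copies of 2, then n copies of 0) by replacing, for each j ∈ S, the j-th copy of 2 by two consecutive entries equal to 1 and deleting one trailing 0 for each such replacement. Then every c^S is a c-string of length 2n+1, and the map S ↦ c^S is injective; in particular there are at least 2^n distinct c-strings of length 2n+1. -/

import Mathlib

/-- A c-string of length `k` is a sequence of nonnegative integers `(c₁, …, c_k)`
with `c₁ = 1`, `c_{i+1} ≤ 2·c_i` for all `1 ≤ i ≤ k−1`, and `c₁ + ⋯ + c_k = k`. -/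
def IsCString (k : ℕ) (l : List ℕ) : Prop :=
  l.length = k ∧ l.head? = some 1 ∧ l.Chain' (fun a b => b ≤ 2 * a) ∧ l.sum = k

/-- `Π_k`, the number of c-strings of length `k`. -/
noncomputable def numCStrings (k : ℕ) : ℕ :=
  Nat.card {l : List ℕ // IsCString k l}

/-- For `S ⊆ {1, …, n}`, the sequence obtained from `(1, 2, 2, …, 2, 0, 0, …, 0)`
(one `1`, then `n` copies of `2`, then `n` copies of `0`) by replacing, for each
`j ∈ S`, the `j`-th copy of `2` by two consecutive entries equal to `1`, and
deleting one trailing `0` for each such replacement. -/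
def cSeq (n : ℕ) (S : Finset ℕ) : List ℕ :=
  1 :: (((List.range n).flatMap fun j => if j + 1 ∈ S then [1, 1] else [2]) ++
    List.replicate (n - S.card) 0)

/-!
The blocks `[2]` and `[1, 1]` both sum to `2`, so the nonzero part of `c^S` has sum `2n + 1` and
length `n + |S| + 1`, and the `n - |S|` trailing zeros make the length `2n + 1`. Every entry is at
most `2` and every zero is followed only by zeros, so the doubling condition holds. Deleting the
zeros leaves `1` followed by a concatenation of blocks, which decodes uniquely because `[2]` and
`[1, 1]` start differently; this recovers `S`.
-/

open Finset

lemma isChain_append_replicate_zero {l : List ℕ} (hl : ∀ x ∈ l, 1 ≤ x ∧ x ≤ 2) (m : ℕ) :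
    (l ++ List.replicate m 0).IsChain (fun a b => b ≤ 2 * a) := by
  refine List.Pairwise.isChain (List.pairwise_append.2 ⟨?_, ?_, ?_⟩)
  · exact List.pairwise_of_forall_mem_list fun a ha b hb => by grind
  · exact List.pairwise_replicate.2 (Or.inr le_rfl)
  · intro a _ b hb
    rw [List.eq_of_mem_replicate hb]
    exact Nat.zero_le _

lemma flatMap_ones_or_two_injective :
    Function.Injective fun bs : List Bool => bs.flatMap fun b => if b then [1, 1] else [2]
  | [], [], _ => rfl
  | [], c :: _, h => by cases c <;> simp at h
  | b :: _, [], h => by cases b <;> simp at h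
  | b :: bs, c :: cs, h => by
    cases b <;> cases c <;> simp at h
    all_goals exact congrArg _ (flatMap_ones_or_two_injective h)

lemma card_filter_succ_mem {n : ℕ} {S : Finset ℕ} (hS : S ⊆ Icc 1 n) :
    #{j ∈ range n | j + 1 ∈ S} = #S := by
  refine card_nbij' (· + 1) (· - 1) ?_ ?_ ?_ ?_ <;> intro j hj
  · simp_all
  · have := mem_Icc.1 (hS hj); simp_all; omega
  · simp
  · have := mem_Icc.1 (hS hj); simp; omega

theorem finite_setOf_isCString (k : ℕ) : {l | IsCString k l}.Finite := by
  refine ((List.finite_length_eq (Fin (k + 1)) k).image (List.map Fin.val)).subset ?_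
  rintro l ⟨hlen, -, -, hsum⟩
  have hle : ∀ x ∈ l, x < k + 1 := fun x hx => Nat.lt_succ_of_le (hsum ▸ List.le_sum_of_mem hx)
  refine ⟨l.pmap (fun x hx => ⟨x, hx⟩) hle, by simpa using hlen, ?_⟩
  simp [List.map_pmap]

theorem le_numCStrings_of_injOn {α : Type*} {k : ℕ} (s : Finset α) (f : α → List ℕ)
    (hf : ∀ a ∈ s, IsCString k (f a)) (hinj : Set.InjOn f s) : #s ≤ numCStrings k :=
  calc #s = (s : Set α).ncard := (Set.ncard_coe_finset s).symm
    _ ≤ {l | IsCString k l}.ncard :=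
      Set.ncard_le_ncard_of_injOn f hf hinj (finite_setOf_isCString k)
    _ = numCStrings k := (Nat.card_coe_set_eq _).symm

section cSeq

variable {n : ℕ} {S : Finset ℕ}

def cBlocks (n : ℕ) (S : Finset ℕ) : List ℕ :=
  (List.range n).flatMap fun j => if j + 1 ∈ S then [1, 1] else [2]

lemma cSeq_eq_cons_cBlocks_append (n : ℕ) (S : Finset ℕ) :
    cSeq n S = 1 :: (cBlocks n S ++ List.replicate (n - #S) 0) := rfl

lemma cBlocks_eq_flatMap_map (n : ℕ) (S : Finset ℕ) :
    cBlocks n S = ((List.range n).map fun j => decide (j + 1 ∈ S)).flatMap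
      fun b => if b then [1, 1] else [2] := by
  simp [cBlocks, List.flatMap_map]

lemma mem_cBlocks {x : ℕ} (hx : x ∈ cBlocks n S) : x = 1 ∨ x = 2 := by
  simp only [cBlocks, List.mem_flatMap] at hx
  grind

lemma cBlocks_succ (n : ℕ) (S : Finset ℕ) :
    cBlocks (n + 1) S = cBlocks n S ++ if n + 1 ∈ S then [1, 1] else [2] := by
  simp [cBlocks, List.range_succ]

lemma length_cBlocks (n : ℕ) (S : Finset ℕ) :
    (cBlocks n S).length = n + #{j ∈ range n | j + 1 ∈ S} := by
  induction n with
  | zero => rfl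
  | succ n ih =>
    rw [cBlocks_succ, List.length_append, ih, range_add_one, filter_insert]
    split_ifs <;> simp <;> omega

lemma sum_cBlocks (n : ℕ) (S : Finset ℕ) : (cBlocks n S).sum = 2 * n := by
  induction n with
  | zero => rfl
  | succ n ih =>
    rw [cBlocks_succ, List.sum_append, ih]
    split_ifs <;> simp <;> omega

theorem isCString_cSeq (hS : S ⊆ Icc 1 n) : IsCString (2 * n + 1) (cSeq n S) := by
  have hcard : #S ≤ n := by simpa using card_le_card hS
  refine ⟨?_, rfl, ?_, ?_⟩
  · simp only [cSeq_eq_cons_cBlocks_append, List.length_cons, List.length_append,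
      List.length_replicate, length_cBlocks, card_filter_succ_mem hS]
    omega
  · rw [cSeq_eq_cons_cBlocks_append, ← List.cons_append]
    refine isChain_append_replicate_zero (fun x hx => ?_) _
    rcases List.mem_cons.1 hx with rfl | hx
    · omega
    · rcases mem_cBlocks hx with rfl | rfl <;> omega
  · simp [cSeq_eq_cons_cBlocks_append, sum_cBlocks]
    omega

lemma filter_ne_zero_cSeq (n : ℕ) (S : Finset ℕ) :
    (cSeq n S).filter (· ≠ 0) = 1 :: cBlocks n S := by
  rw [cSeq_eq_cons_cBlocks_append, List.filter_cons_of_pos (by simp), List.filter_append,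
    List.filter_replicate, List.filter_eq_self.2]
  · simp
  · intro x hx
    rcases mem_cBlocks hx with rfl | rfl <;> simp

theorem cSeq_injOn : Set.InjOn (cSeq n) {S | S ⊆ Icc 1 n} := by
  intro S hS T hT h
  have hblocks := congrArg (List.filter (· ≠ 0)) h
  rw [filter_ne_zero_cSeq, filter_ne_zero_cSeq, List.cons.injEq, cBlocks_eq_flatMap_map,
    cBlocks_eq_flatMap_map] at hblocks
  have hmem := List.map_inj_left.1 (flatMap_ones_or_two_injective hblocks.2)
  ext a
  by_cases ha : a ∈ Icc 1 n
  · obtain ⟨j, rfl⟩ : ∃ j, a = j + 1 := ⟨a - 1, by grind⟩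
    simpa using hmem j (by grind)
  · exact ⟨fun h => absurd (hS h) ha, fun h => absurd (hT h) ha⟩

end cSeq

theorem cSeq_isCString_injective_general (n : ℕ) :
    (∀ S : Finset ℕ, S ⊆ Finset.Icc 1 n → IsCString (2 * n + 1) (cSeq n S)) ∧
    (∀ S T : Finset ℕ, S ⊆ Finset.Icc 1 n → T ⊆ Finset.Icc 1 n →
      cSeq n S = cSeq n T → S = T) ∧
    2 ^ n ≤ numCStrings (2 * n + 1) := by
  refine ⟨fun S hS => isCString_cSeq hS, fun S T hS hT h => cSeq_injOn hS hT h, ?_⟩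
  calc 2 ^ n = #(Icc 1 n).powerset := by simp
    _ ≤ numCStrings (2 * n + 1) :=
      le_numCStrings_of_injOn _ (cSeq n) (fun S hS => isCString_cSeq (mem_powerset.1 hS))
        fun S hS T hT => cSeq_injOn (mem_powerset.1 hS) (mem_powerset.1 hT)

/-- Every `cSeq n S` (for `S ⊆ {1, …, n}`, `n ≥ 1`) is a c-string of length
`2n+1`, the map `S ↦ cSeq n S` is injective, and in particular there are at
least `2^n` distinct c-strings of length `2n+1`. -/
theorem cSeq_isCString_injective (n : ℕ) (hn : 1 ≤ n) :
    (∀ S : Finset ℕ, S ⊆ Finset.Icc 1 n → IsCString (2 * n + 1) (cSeq n S)) ∧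
    (∀ S T : Finset ℕ, S ⊆ Finset.Icc 1 n → T ⊆ Finset.Icc 1 n →
      cSeq n S = cSeq n T → S = T) ∧
    2 ^ n ≤ numCStrings (2 * n + 1) :=
  cSeq_isCString_injective_general n
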